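/- If the range of I − T is contained in M(T) = {u : sup_n ‖∑_{k=0}^n T^k u‖ < ∞}, then the residual spectrum of T is contained in the open unit disk. -/

import Mathlib

open ContinuousLinearMap Filter Metric
open scoped InnerProductSpace ComplexConjugate

lemma exists_weak_cluster {H : Type*} [NormedAddCommGroup H] [InnerProductSpace ℂ H]
    [CompleteSpace H] (y : ℕ → H) (R : ℝ) (hR : ∀ n, ‖y n‖ ≤ R) :
    ∃ (z : H) (U : Ultrafilter ℕ), ↑U ≤ (Filter.atTop : Filter ℕ) ∧
      ∀ w : H, Tendsto (fun n => (⟪y n, w⟫_ℂ)) U (nhds (⟪z, w⟫_ℂ)) := by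
  set U : Ultrafilter ℕ := Ultrafilter.of atTop
  have hU : (U : Filter ℕ) ≤ atTop := Ultrafilter.of_le atTop
  -- each inner product sequence is bounded, hence has a limit along U
  have hlim : ∀ w : H, ∃ c : ℂ, Tendsto (fun n => (⟪y n, w⟫_ℂ)) U (nhds c) ∧ ‖c‖ ≤ R * ‖w‖ := by
    intro w
    have hb : ∀ n, (⟪y n, w⟫_ℂ) ∈ closedBall (0:ℂ) (R * ‖w‖) := by
      intro n
      rw [mem_closedBall, dist_zero_right]
      exact (norm_inner_le_norm _ _).trans (mul_le_mul_of_nonneg_right (hR n) (norm_nonneg _))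
    obtain ⟨c, hc, hlc⟩ := (isCompact_closedBall (0:ℂ) (R * ‖w‖)).ultrafilter_le_nhds
      (U.map fun n => (⟪y n, w⟫_ℂ)) (by
        rw [Filter.le_principal_iff, Ultrafilter.mem_coe, Ultrafilter.mem_map]
        exact Filter.univ_mem' hb)
    refine ⟨c, hlc, ?_⟩
    simpa [dist_zero_right] using hc
  choose L hL hLb using hlim
  -- L is a bounded linear functional
  have hadd : ∀ v w : H, L (v + w) = L v + L w := by
    intro v w
    have h1 : Tendsto (fun n => (⟪y n, v + w⟫_ℂ)) U (nhds (L v + L w)) := by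
      simpa [inner_add_right] using (hL v).add (hL w)
    exact tendsto_nhds_unique (hL (v + w)) h1
  have hsmul : ∀ (c : ℂ) (w : H), L (c • w) = c * L w := by
    intro c w
    have h1 : Tendsto (fun n => (⟪y n, c • w⟫_ℂ)) U (nhds (c * L w)) := by
      simpa [inner_smul_right] using (hL w).const_mul c
    exact tendsto_nhds_unique (hL (c • w)) h1
  let φ : H →ₗ[ℂ] ℂ :=
    { toFun := L, map_add' := hadd, map_smul' := hsmul }
  let φ' : StrongDual ℂ H := LinearMap.mkContinuous φ R (fun w => hLb w)
  refine ⟨(InnerProductSpace.toDual ℂ H).symm φ', U, hU, fun w => ?_⟩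
  have : (⟪(InnerProductSpace.toDual ℂ H).symm φ', w⟫_ℂ) = φ' w := by
    rw [← InnerProductSpace.toDual_apply_apply]
    simp
  rw [this]
  exact hL w

lemma eigen_of_adjoint_eigen {H : Type*} [NormedAddCommGroup H] [InnerProductSpace ℂ H]
    [CompleteSpace H] (T : H →L[ℂ] H) (M : ℝ) (hM : ∀ n : ℕ, ‖T ^ n‖ ≤ M)
    (l : ℂ) (hl : 1 ≤ ‖l‖) (x : H) (hx : x ≠ 0)
    (hTx : adjoint T x = (starRingEnd ℂ) l • x) :
    ∃ z : H, z ≠ 0 ∧ T z = l • z := by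
  have hl0 : l ≠ 0 := by
    intro h; rw [h] at hl; simp at hl; linarith
  set c : ℂ := l⁻¹ with hc
  have hcl : c * l = 1 := inv_mul_cancel₀ hl0
  have hlc : l * c = 1 := mul_inv_cancel₀ hl0
  have hcnorm : ‖c‖ ≤ 1 := by
    rw [hc, norm_inv]
    exact inv_le_one_of_one_le₀ hl
  -- adjoint powers
  have hadj_pow' : ∀ k : ℕ, ((adjoint T) ^ k) x = ((starRingEnd ℂ) l) ^ k • x := by
    intro k
    induction k with
    | zero => simp
    | succ n ih =>
      rw [pow_succ, ContinuousLinearMap.mul_apply, hTx, map_smul, ih, smul_smul, ← pow_succ']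
  have hadj_pow : ∀ k : ℕ, adjoint (T ^ k) x = ((starRingEnd ℂ) l) ^ k • x := by
    intro k
    have h1 : adjoint (T ^ k) = (adjoint T) ^ k := by
      rw [← star_eq_adjoint, ← star_eq_adjoint, ← star_pow]
    rw [h1, hadj_pow']
  -- inner products with x
  have hinner_pow : ∀ k : ℕ, (⟪x, (T ^ k) x⟫_ℂ) = l ^ k * (‖x‖ : ℂ) ^ 2 := by
    intro k
    rw [← ContinuousLinearMap.adjoint_inner_left, hadj_pow, inner_smul_left]
    simp [inner_self_eq_norm_sq_to_K]
  -- the averaged sequence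
  set y : ℕ → H := fun n => (n : ℂ)⁻¹ • ∑ k ∈ Finset.range n, c ^ k • (T ^ k) x with hy
  have hM0 : (0:ℝ) ≤ M := le_trans (norm_nonneg _) (hM 0)
  -- norm bounds for terms
  have hterm : ∀ k : ℕ, ‖c ^ k • (T ^ k) x‖ ≤ M * ‖x‖ := by
    intro k
    rw [norm_smul, norm_pow]
    calc ‖c‖ ^ k * ‖(T ^ k) x‖ ≤ 1 * ‖(T ^ k) x‖ := by
          apply mul_le_mul_of_nonneg_right _ (norm_nonneg _)
          exact pow_le_one₀ (norm_nonneg _) hcnorm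
      _ = ‖(T ^ k) x‖ := one_mul _
      _ ≤ ‖T ^ k‖ * ‖x‖ := (T ^ k).le_opNorm x
      _ ≤ M * ‖x‖ := mul_le_mul_of_nonneg_right (hM k) (norm_nonneg _)
  have hybound : ∀ n, ‖y n‖ ≤ M * ‖x‖ := by
    intro n
    rcases Nat.eq_zero_or_pos n with h0 | hn
    · simp [hy, h0]
      positivity
    · rw [hy]
      simp only
      rw [norm_smul]
      calc ‖((n:ℂ))⁻¹‖ * ‖∑ k ∈ Finset.range n, c ^ k • (T ^ k) x‖
          ≤ (n:ℝ)⁻¹ * (n * (M * ‖x‖)) := by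
            apply mul_le_mul
            · simp
            · calc ‖∑ k ∈ Finset.range n, c ^ k • (T ^ k) x‖
                  ≤ ∑ k ∈ Finset.range n, ‖c ^ k • (T ^ k) x‖ := norm_sum_le _ _
                _ ≤ ∑ _k ∈ Finset.range n, (M * ‖x‖) :=
                    Finset.sum_le_sum fun k _ => hterm k
                _ = n * (M * ‖x‖) := by simp
            · exact norm_nonneg _
            · simp
        _ = (n:ℝ)⁻¹ * n * (M * ‖x‖) := by ring
        _ = M * ‖x‖ := by
            rw [inv_mul_cancel₀ (by exact_mod_cast hn.ne' : (n:ℝ) ≠ 0), one_mul]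
  -- inner product with x
  have hinner_y : ∀ n : ℕ, 1 ≤ n → (⟪x, y n⟫_ℂ) = (‖x‖ : ℂ) ^ 2 := by
    intro n hn
    rw [hy]
    simp only [inner_smul_right, inner_sum]
    have : ∀ k ∈ Finset.range n, c ^ k * (⟪x, (T ^ k) x⟫_ℂ) = (‖x‖ : ℂ) ^ 2 := by
      intro k _
      rw [hinner_pow k, ← mul_assoc, ← mul_pow, hcl, one_pow, one_mul]
    rw [Finset.sum_congr rfl this, Finset.sum_const, Finset.card_range, nsmul_eq_mul,
      ← mul_assoc, inv_mul_cancel₀ (by exact_mod_cast Nat.one_le_iff_ne_zero.mp hn : (n:ℂ) ≠ 0),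
      one_mul]
  -- weak cluster point
  obtain ⟨z, U, hU, hz⟩ := exists_weak_cluster y (M * ‖x‖) hybound
  -- z ≠ 0
  have hzx : (⟪z, x⟫_ℂ) = (‖x‖ : ℂ) ^ 2 := by
    have h1 : Tendsto (fun n => (⟪y n, x⟫_ℂ)) (U : Filter ℕ) (nhds ((‖x‖ : ℂ) ^ 2)) := by
      apply Tendsto.congr' _ tendsto_const_nhds
      have : ∀ᶠ n in (U : Filter ℕ), 1 ≤ n := hU (Filter.eventually_ge_atTop 1)
      filter_upwards [this] with n hn
      rw [← inner_conj_symm, hinner_y n hn]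
      simp
    exact tendsto_nhds_unique (hz x) h1
  have hz0 : z ≠ 0 := by
    intro h
    rw [h, inner_zero_left] at hzx
    have : (‖x‖ : ℂ) ^ 2 ≠ 0 := by
      simp [hx]
    exact this hzx.symm
  -- almost invariance: c • T (y n) - y n is small
  set f : ℕ → H := fun k => c ^ k • (T ^ k) x with hf
  have halmost : ∀ n : ℕ, c • T (y n) - y n = (n : ℂ)⁻¹ • (c ^ n • (T ^ n) x - x) := by
    intro n
    have hTs : c • T (∑ k ∈ Finset.range n, f k) = ∑ k ∈ Finset.range n, f (k + 1) := by
      rw [map_sum, Finset.smul_sum]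
      apply Finset.sum_congr rfl
      intro k _
      rw [hf]
      simp only
      rw [map_smul, smul_smul, ← pow_succ']
      congr 1
      rw [pow_succ', ContinuousLinearMap.mul_apply]
    have h2 : c • T (∑ k ∈ Finset.range n, f k) - (∑ k ∈ Finset.range n, f k)
        = c ^ n • (T ^ n) x - x := by
      rw [hTs, ← Finset.sum_sub_distrib, Finset.sum_range_sub f n, hf]
      simp
    calc c • T (y n) - y n
        = (n : ℂ)⁻¹ • (c • T (∑ k ∈ Finset.range n, f k) - ∑ k ∈ Finset.range n, f k) := by
          rw [hy]
          simp only [map_smul, smul_sub, smul_smul, mul_comm c]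
      _ = (n : ℂ)⁻¹ • (c ^ n • (T ^ n) x - x) := by rw [h2]
  refine ⟨z, hz0, ?_⟩
  apply ext_inner_right ℂ
  intro w
  have hrw : ∀ n : ℕ, (⟪T (y n), w⟫_ℂ)
      = (starRingEnd ℂ) l * (⟪y n, w⟫_ℂ)
        + (starRingEnd ℂ) l * (⟪(n : ℂ)⁻¹ • (c ^ n • (T ^ n) x - x), w⟫_ℂ) := by
    intro n
    have hT : T (y n) = l • (y n) + l • ((n : ℂ)⁻¹ • (c ^ n • (T ^ n) x - x)) := by
      calc T (y n) = l • (c • T (y n)) := by rw [smul_smul, hlc, one_smul]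
        _ = l • (y n + (c • T (y n) - y n)) := by rw [add_sub_cancel]
        _ = l • y n + l • ((n:ℂ)⁻¹ • (c ^ n • (T ^ n) x - x)) := by
            rw [smul_add, halmost n]
    rw [hT]
    simp only [inner_add_left, inner_smul_left]
  have hr0 : Tendsto (fun n : ℕ => (⟪(n : ℂ)⁻¹ • (c ^ n • (T ^ n) x - x), w⟫_ℂ))
      atTop (nhds 0) := by
    refine squeeze_zero_norm (a := fun n : ℕ => (n:ℝ)⁻¹ * ((M * ‖x‖ + ‖x‖) * ‖w‖))
      (fun n => ?_) ?_
    ·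
      calc ‖(⟪(n : ℂ)⁻¹ • (c ^ n • (T ^ n) x - x), w⟫_ℂ)‖
          ≤ ‖(n : ℂ)⁻¹ • (c ^ n • (T ^ n) x - x)‖ * ‖w‖ := norm_inner_le_norm _ _
        _ ≤ (n:ℝ)⁻¹ * ((M * ‖x‖ + ‖x‖) * ‖w‖) := by
            rw [norm_smul]
            have h4 : ‖c ^ n • (T ^ n) x - x‖ ≤ M * ‖x‖ + ‖x‖ :=
              (norm_sub_le _ _).trans (add_le_add (hterm n) le_rfl)
            have h5 : ‖((n:ℂ))⁻¹‖ = (n:ℝ)⁻¹ := by simp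
            rw [h5, mul_assoc]
            exact mul_le_mul_of_nonneg_left
              (mul_le_mul_of_nonneg_right h4 (norm_nonneg _)) (by positivity)
    · have := (tendsto_inv_atTop_nhds_zero_nat (𝕜 := ℝ)).mul_const ((M * ‖x‖ + ‖x‖) * ‖w‖)
      simpa using this
  have hlim1 : Tendsto (fun n => (⟪T (y n), w⟫_ℂ)) (U : Filter ℕ)
      (nhds ((starRingEnd ℂ) l * (⟪z, w⟫_ℂ))) := by
    have h6 : Tendsto (fun n => (starRingEnd ℂ) l * (⟪y n, w⟫_ℂ)
        + (starRingEnd ℂ) l * (⟪(n : ℂ)⁻¹ • (c ^ n • (T ^ n) x - x), w⟫_ℂ)) (U : Filter ℕ)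
        (nhds ((starRingEnd ℂ) l * (⟪z, w⟫_ℂ) + (starRingEnd ℂ) l * 0)) :=
      ((hz w).const_mul _).add ((hr0.mono_left hU).const_mul _)
    rw [mul_zero, add_zero] at h6
    exact h6.congr (fun n => (hrw n).symm)
  have hlim2 : Tendsto (fun n => (⟪T (y n), w⟫_ℂ)) (U : Filter ℕ)
      (nhds (⟪T z, w⟫_ℂ)) := by
    have h7 := hz (adjoint T w)
    simpa only [ContinuousLinearMap.adjoint_inner_right] using h7
  rw [tendsto_nhds_unique hlim2 hlim1, inner_smul_left]

theorem stmt_10 {H : Type*} [NormedAddCommGroup H] [InnerProductSpace ℂ H]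
    [CompleteSpace H] (T : H →L[ℂ] H)
    (h : Set.range (fun x : H => x - T x) ⊆
      {u : H | ∃ C, ∀ n : ℕ, ‖∑ k ∈ Finset.range (n + 1), (T ^ k) u‖ ≤ C}) :
    {l : ℂ | ∃ x : H, x ≠ 0 ∧ adjoint T x = (starRingEnd ℂ) l • x} \
      {l : ℂ | ∃ x : H, x ≠ 0 ∧ T x = l • x} ⊆ Metric.ball (0 : ℂ) 1 := by
  -- pointwise power bounds
  have hpb : ∀ v : H, ∃ C, ∀ n : ℕ, ‖(T ^ n) v‖ ≤ C := by
    intro v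
    obtain ⟨C, hC⟩ := h ⟨v, rfl⟩
    have htel : ∀ m : ℕ, ∑ k ∈ Finset.range m, (T ^ k) (v - T v) = v - (T ^ m) v := by
      intro m
      have : ∀ k ∈ Finset.range m, (T ^ k) (v - T v) = (T ^ k) v - (T ^ (k+1)) v := by
        intro k _
        rw [map_sub, pow_succ, ContinuousLinearMap.mul_apply]
      rw [Finset.sum_congr rfl this, Finset.sum_range_sub' (fun k => (T ^ k) v) m]
      simp
    have hC0 : (0:ℝ) ≤ C := le_trans (norm_nonneg _) (hC 0)
    refine ⟨‖v‖ + C, fun n => ?_⟩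
    cases n with
    | zero => simpa using le_add_of_nonneg_right (a := ‖v‖) hC0
    | succ m =>
      have h1 := hC m
      rw [htel (m+1)] at h1
      calc ‖(T ^ (m+1)) v‖ = ‖v - (v - (T ^ (m+1)) v)‖ := by rw [sub_sub_cancel]
        _ ≤ ‖v‖ + ‖v - (T ^ (m+1)) v‖ := norm_sub_le _ _
        _ ≤ ‖v‖ + C := add_le_add le_rfl h1
  obtain ⟨M, hM⟩ := banach_steinhaus hpb
  rintro l ⟨⟨x, hx, hTx⟩, hnot⟩
  rw [Metric.mem_ball, dist_zero_right]
  by_contra hge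
  push_neg at hge
  exact hnot (eigen_of_adjoint_eigen T M hM l hge x hx hTx)
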